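/- The fixed point of the morphism a → abc, b → ac, c → b (starting from a and iterating) is an infinite square-free word over the alphabet {a,b,c}: no finite factor of it has the form XX with X nonempty. -/

import Mathlib

/-- The morphism `a → abc`, `b → ac`, `c → b`, with `a, b, c` represented by
`0, 1, 2 : Fin 3`. -/
def mor : Fin 3 → List (Fin 3) := ![[0, 1, 2], [0, 2], [1]]

/-- Iterates of the morphism starting from the letter `a`. -/
def iterWord : ℕ → List (Fin 3)
  | 0 => [0]
  | m + 1 => (iterWord m).flatMap mor

section Aux

abbrev H (w : List (Fin 3)) : List (Fin 3) := w.flatMap mor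

lemma mor0 : mor 0 = [0,1,2] := rfl
lemma mor1 : mor 1 = [0,2] := rfl
lemma mor2 : mor 2 = [1] := rfl
lemma fin3 (x : Fin 3) : x = 0 ∨ x = 1 ∨ x = 2 := by revert x; decide
lemma H_nil : H [] = [] := rfl
lemma H_cons (x w) : H (x::w) = mor x ++ H w := by simp [H]
lemma H_append (u v) : H (u ++ v) = H u ++ H v := by simp [H]
lemma mor_ne_nil (x : Fin 3) : mor x ≠ [] := by rcases fin3 x with rfl|rfl|rfl <;> decide
lemma prefixFree : ∀ x y : Fin 3, mor x <+: mor y → x = y := by decide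

lemma snoc_inj {A B : List (Fin 3)} {x y : Fin 3} (h : A ++ [x] = B ++ [y]) :
    A = B ∧ x = y := by
  have h2 := congrArg List.reverse h
  simp only [List.reverse_append, List.reverse_cons, List.reverse_nil, List.nil_append,
    List.singleton_append, List.cons.injEq] at h2
  exact ⟨List.reverse_injective h2.2, h2.1⟩

/-- Splitting at an occurrence of 0: every 0 starts a block. -/
lemma split0 : ∀ (w A B : List (Fin 3)), H w = A ++ 0 :: B →
    ∃ w1 w2, w = w1 ++ w2 ∧ H w1 = A ∧ H w2 = 0 :: B := by
  intro w
  induction w with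
  | nil => intro A B h; rw [H_nil] at h; exact absurd h (by simp)
  | cons x w ih =>
    intro A B h
    rw [H_cons] at h
    rcases fin3 x with rfl|rfl|rfl
    · rw [mor0] at h
      match A, h with
      | [], h => exact ⟨[], 0::w, by simp, rfl, by rw [H_cons, mor0]; simpa using h⟩
      | [a], h =>
        simp only [List.cons_append, List.nil_append, List.cons.injEq] at h
        exact absurd h.2.1 (by decide)
      | [a,b], h =>
        simp only [List.cons_append, List.nil_append, List.cons.injEq] at h
        exact absurd h.2.2.1 (by decide)
      | a::b::c::A, h =>
        simp only [List.cons_append, List.nil_append, List.cons.injEq] at h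
        obtain ⟨rfl, rfl, rfl, h⟩ := h
        obtain ⟨w1, w2, rfl, h1, h2⟩ := ih A B h
        exact ⟨0::w1, w2, rfl, by rw [H_cons, mor0, h1]; rfl, h2⟩
    · rw [mor1] at h
      match A, h with
      | [], h => exact ⟨[], 1::w, by simp, rfl, by rw [H_cons, mor1]; simpa using h⟩
      | [a], h =>
        simp only [List.cons_append, List.nil_append, List.cons.injEq] at h
        exact absurd h.2.1 (by decide)
      | a::b::A, h =>
        simp only [List.cons_append, List.nil_append, List.cons.injEq] at h
        obtain ⟨rfl, rfl, h⟩ := h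
        obtain ⟨w1, w2, rfl, h1, h2⟩ := ih A B h
        exact ⟨1::w1, w2, rfl, by rw [H_cons, mor1, h1]; rfl, h2⟩
    · rw [mor2] at h
      match A, h with
      | [], h =>
        simp only [List.cons_append, List.nil_append, List.cons.injEq] at h
        exact absurd h.1 (by decide)
      | a::A, h =>
        simp only [List.cons_append, List.nil_append, List.cons.injEq] at h
        obtain ⟨rfl, h⟩ := h
        obtain ⟨w1, w2, rfl, h1, h2⟩ := ih A B h
        exact ⟨2::w1, w2, rfl, by rw [H_cons, mor2, h1]; rfl, h2⟩

/-- Decoding a prefix: the code is prefix-free. -/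
lemma decodePrefix : ∀ (m β t : List (Fin 3)), H β = H m ++ t →
    ∃ β', β = m ++ β' ∧ H β' = t := by
  intro m
  induction m with
  | nil => intro β t h; exact ⟨β, by simp, by simpa using h⟩
  | cons x m ih =>
    intro β t h
    rw [H_cons, List.append_assoc] at h
    match β with
    | [] =>
      exfalso
      have : ([] : List (Fin 3)) = mor x ++ (H m ++ t) := h
      exact mor_ne_nil x (List.append_eq_nil_iff.1 this.symm).1
    | x'::β' =>
      rw [H_cons] at h
      have hx : x' = x := by
        apply prefixFree
        have h1 : mor x' <+: mor x ++ (H m ++ t) := h ▸ ⟨H β', rfl⟩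
        have h2 : mor x <+: mor x ++ (H m ++ t) := ⟨H m ++ t, rfl⟩
        rcases List.prefix_or_prefix_of_prefix h1 h2 with hp | hp
        · exact hp
        · exact (prefixFree _ _ hp).symm ▸ List.prefix_refl _
      subst hx
      have h' : H β' = H m ++ t := List.append_cancel_left h
      obtain ⟨β'', rfl, ht⟩ := ih β' t h'
      exact ⟨β'', rfl, ht⟩

lemma tailNo22 {x : Fin 3} {w : List (Fin 3)} (h : ¬([2,2] <:+: x::w)) : ¬([2,2] <:+: w) :=
  fun hc => h (List.infix_cons hc)

/-- 0-free prefixes of images. -/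
lemma zeroFreePrefix : ∀ (w g B : List (Fin 3)), ¬([2,2] <:+: w) → H w = g ++ B →
    (0 : Fin 3) ∉ g → g = [] ∨ (g = [1] ∧ ∃ w', w = 2::w') := by
  intro w
  induction w with
  | nil =>
    intro g B _ h _
    rw [H_nil] at h
    left; exact (List.append_eq_nil_iff.1 h.symm).1
  | cons x w ih =>
    intro g B hno h hg
    rw [H_cons] at h
    rcases fin3 x with rfl|rfl|rfl
    · rw [mor0] at h
      match g, h with
      | [], _ => left; rfl
      | a::g', h =>
        exfalso
        simp only [List.cons_append, List.cons.injEq] at h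
        exact hg (h.1 ▸ List.mem_cons_self)
    · rw [mor1] at h
      match g, h with
      | [], _ => left; rfl
      | a::g', h =>
        exfalso
        simp only [List.cons_append, List.cons.injEq] at h
        exact hg (h.1 ▸ List.mem_cons_self)
    · rw [mor2] at h
      match g, h with
      | [], _ => left; rfl
      | a::g', h =>
        simp only [List.cons_append, List.nil_append, List.cons.injEq] at h
        obtain ⟨rfl, h⟩ := h
        have hno' : ¬([2,2] <:+: w) := fun hc => hno (List.infix_cons hc)
        rcases ih g' B hno' h (fun hc => hg (List.mem_cons_of_mem _ hc)) with rfl | ⟨rfl, w', rfl⟩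
        · right; exact ⟨rfl, w, rfl⟩
        · exact absurd (show [2,2] <:+: 2::2::w' from ⟨[], w', rfl⟩) hno

lemma zf2 : ∀ (w g B : List (Fin 3)), ¬([2,2] <:+: w) → (2:Fin 3) :: H w = g ++ B →
    (0 : Fin 3) ∉ g → g <:+: [1,2,1] := by
  intro w g B hno h hg
  match g, h with
  | [], _ => exact ⟨[], [1,2,1], rfl⟩
  | a::g', h =>
    simp only [List.cons_append, List.cons.injEq] at h
    obtain ⟨rfl, h⟩ := h
    rcases zeroFreePrefix w g' B hno h (fun hc => hg (List.mem_cons_of_mem _ hc)) with rfl | ⟨rfl, _⟩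
    · exact ⟨[1], [1], rfl⟩
    · exact ⟨[1], [], rfl⟩

/-- 0-free factors of images are short. -/
lemma zeroFreeFactor : ∀ (w A g B : List (Fin 3)), ¬([2,2] <:+: w) →
    H w = A ++ (g ++ B) → (0 : Fin 3) ∉ g → g <:+: [1,2,1] := by
  intro w
  induction w with
  | nil =>
    intro A g B _ h hg
    rw [H_nil] at h
    have : g = [] := by
      rcases List.append_eq_nil_iff.1 h.symm with ⟨_, h2⟩
      exact (List.append_eq_nil_iff.1 h2).1
    subst this; exact ⟨[], [1,2,1], rfl⟩
  | cons x w ih =>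
    intro A g B hno h hg
    rw [H_cons] at h
    have hno' := tailNo22 hno
    rcases fin3 x with rfl|rfl|rfl
    · rw [mor0] at h
      match A, h with
      | [], h =>
        match g, h with
        | [], _ => exact ⟨[], [1,2,1], rfl⟩
        | a::g', h =>
          simp only [List.cons_append, List.nil_append, List.cons.injEq] at h
          exact absurd (h.1 ▸ List.mem_cons_self) hg
      | [a], h =>
        simp only [List.cons_append, List.nil_append, List.cons.injEq] at h
        obtain ⟨rfl, h⟩ := h
        match g, h with
        | [], _ => exact ⟨[], [1,2,1], rfl⟩
        | b::g', h =>
          simp only [List.cons_append, List.cons.injEq] at h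
          obtain ⟨rfl, h⟩ := h
          match g', h with
          | [], _ => exact ⟨[], [2,1], rfl⟩
          | c::g'', h =>
            simp only [List.cons_append, List.cons.injEq] at h
            obtain ⟨rfl, h⟩ := h
            rcases zeroFreePrefix w g'' B hno' h
              (fun hc => hg (by simp [hc])) with rfl | ⟨rfl, _⟩
            · exact ⟨[], [1], rfl⟩
            · exact ⟨[], [], rfl⟩
      | [a,b], h =>
        simp only [List.cons_append, List.nil_append, List.cons.injEq] at h
        obtain ⟨rfl, rfl, h⟩ := h
        have : (2:Fin 3) :: H w = g ++ B := h
        exact zf2 w g B hno' this hg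
      | a::b::c::A', h =>
        simp only [List.cons_append, List.nil_append, List.cons.injEq] at h
        exact ih A' g B hno' h.2.2.2 hg
    · rw [mor1] at h
      match A, h with
      | [], h =>
        match g, h with
        | [], _ => exact ⟨[], [1,2,1], rfl⟩
        | a::g', h =>
          simp only [List.cons_append, List.nil_append, List.cons.injEq] at h
          exact absurd (h.1 ▸ List.mem_cons_self) hg
      | [a], h =>
        simp only [List.cons_append, List.nil_append, List.cons.injEq] at h
        obtain ⟨rfl, h⟩ := h
        exact zf2 w g B hno' h hg
      | a::b::A', h =>
        simp only [List.cons_append, List.nil_append, List.cons.injEq] at h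
        exact ih A' g B hno' h.2.2 hg
    · rw [mor2] at h
      match A, h with
      | [], h =>
        match g, h with
        | [], _ => exact ⟨[], [1,2,1], rfl⟩
        | a::g', h =>
          simp only [List.cons_append, List.nil_append, List.cons.injEq] at h
          obtain ⟨rfl, h⟩ := h
          rcases zeroFreePrefix w g' B hno' h
            (fun hc => hg (by simp [hc])) with rfl | ⟨rfl, w', rfl⟩
          · exact ⟨[], [2,1], rfl⟩
          · exact absurd (show [2,2] <:+: 2::2::w' from ⟨[], w', rfl⟩) hno
      | a::A', h =>
        simp only [List.cons_append, List.nil_append, List.cons.injEq] at h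
        exact ih A' g B hno' h.2 hg

lemma headNe2 : ∀ (w B : List (Fin 3)), H w ≠ 2::B := by
  intro w B h
  match w with
  | [] => exact absurd h (by rw [H_nil]; simp)
  | x::w' =>
    rw [H_cons] at h
    rcases fin3 x with rfl|rfl|rfl <;>
      simp only [mor0, mor1, mor2, List.cons_append, List.cons.injEq] at h <;>
      exact absurd h.1 (by decide)

lemma no010 : ∀ (w : List (Fin 3)), ¬ ([0,1,0] <:+: H w) := by
  rintro w ⟨A, B, h⟩
  obtain ⟨w1, w2, rfl, h1, h2⟩ := split0 w A ([1,0]++B) (by simpa using h.symm)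
  match w2, h2 with
  | x::w2', h2 =>
    rw [H_cons] at h2
    rcases fin3 x with rfl|rfl|rfl <;>
      simp only [mor0, mor1, mor2, List.cons_append, List.nil_append, List.cons.injEq] at h2
    · exact absurd h2.2.2.1 (by decide)
    · exact absurd h2.2.1 (by decide)
    · exact absurd h2.1 (by decide)

/-- every occurrence of 1 is either the middle of `mor 0` or a full block `mor 2`. -/
lemma oneOcc : ∀ (w A B : List (Fin 3)), H w = A ++ 1::B →
    (∃ A', A = A' ++ [0] ∧ ∃ B', B = 2::B') ∨
    (∃ w1 w2, w = w1 ++ 2::w2 ∧ H w1 = A ∧ H w2 = B) := by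
  intro w
  induction w with
  | nil => intro A B h; rw [H_nil] at h; exact absurd h (by simp)
  | cons x w ih =>
    intro A B h
    rw [H_cons] at h
    rcases fin3 x with rfl|rfl|rfl
    · rw [mor0] at h
      match A, h with
      | [], h => simp only [List.cons_append, List.nil_append, List.cons.injEq] at h; exact absurd h.1 (by decide)
      | [a], h =>
        simp only [List.cons_append, List.nil_append, List.cons.injEq] at h
        obtain ⟨rfl, _, h⟩ := h
        exact Or.inl ⟨[], rfl, h ▸ ⟨H w, rfl⟩⟩
      | [a,b], h =>
        simp only [List.cons_append, List.nil_append, List.cons.injEq] at h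
        exact absurd h.2.2.1 (by decide)
      | a::b::c::A', h =>
        simp only [List.cons_append, List.nil_append, List.cons.injEq] at h
        obtain ⟨rfl, rfl, rfl, h⟩ := h
        rcases ih A' B h with ⟨A'', rfl, hB⟩ | ⟨w1, w2, rfl, hw1, hw2⟩
        · exact Or.inl ⟨0::1::2::A'', rfl, hB⟩
        · exact Or.inr ⟨0::w1, w2, rfl, by rw [H_cons, mor0, hw1]; rfl, hw2⟩
    · rw [mor1] at h
      match A, h with
      | [], h => simp only [List.cons_append, List.nil_append, List.cons.injEq] at h; exact absurd h.1 (by decide)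
      | [a], h =>
        simp only [List.cons_append, List.nil_append, List.cons.injEq] at h
        exact absurd h.2.1 (by decide)
      | a::b::A', h =>
        simp only [List.cons_append, List.nil_append, List.cons.injEq] at h
        obtain ⟨rfl, rfl, h⟩ := h
        rcases ih A' B h with ⟨A'', rfl, hB⟩ | ⟨w1, w2, rfl, hw1, hw2⟩
        · exact Or.inl ⟨0::2::A'', rfl, hB⟩
        · exact Or.inr ⟨1::w1, w2, rfl, by rw [H_cons, mor1, hw1]; rfl, hw2⟩
    · rw [mor2] at h
      match A, h with
      | [], h =>
        simp only [List.cons_append, List.nil_append, List.cons.injEq] at h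
        exact Or.inr ⟨[], w, rfl, rfl, h.2⟩
      | a::A', h =>
        simp only [List.cons_append, List.nil_append, List.cons.injEq] at h
        obtain ⟨rfl, h⟩ := h
        rcases ih A' B h with ⟨A'', rfl, hB⟩ | ⟨w1, w2, rfl, hw1, hw2⟩
        · exact Or.inl ⟨1::A'', rfl, hB⟩
        · exact Or.inr ⟨2::w1, w2, rfl, by rw [H_cons, mor2, hw1]; rfl, hw2⟩

lemma no212 : ∀ (w : List (Fin 3)), ¬ ([2,1,2] <:+: H w) := by
  rintro w ⟨A, B, h⟩
  have h' : H w = (A ++ [2]) ++ 1 :: (2::B) := by simpa [List.append_assoc] using h.symm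
  rcases oneOcc w (A++[2]) (2::B) h' with ⟨A', hA, _⟩ | ⟨w1, w2, rfl, hw1, hw2⟩
  · exact absurd (snoc_inj hA).2 (by decide)
  · exact headNe2 w2 B hw2

lemma lastBlock : ∀ (w : List (Fin 3)), w ≠ [] → ∃ w' z, w = w' ++ [z] := by
  intro w hw
  exact ⟨w.dropLast, w.getLast hw, (List.dropLast_append_getLast hw).symm⟩

lemma endsWith1 : ∀ (w Q : List (Fin 3)), H w = Q ++ [1] →
    ∃ w', w = w' ++ [2] ∧ H w' = Q := by
  intro w Q h
  have hw : w ≠ [] := by rintro rfl; rw [H_nil] at h; exact absurd h (by simp)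
  obtain ⟨w', z, rfl⟩ := lastBlock w hw
  rw [H_append] at h
  rcases fin3 z with rfl|rfl|rfl
  · rw [show H [(0:Fin 3)] = [0,1,2] from rfl] at h
    have : (H w' ++ [0,1]) ++ [2] = Q ++ [1] := by simpa [List.append_assoc] using h
    exact absurd (snoc_inj this).2 (by decide)
  · rw [show H [(1:Fin 3)] = [0,2] from rfl] at h
    have : (H w' ++ [0]) ++ [2] = Q ++ [1] := by simpa [List.append_assoc] using h
    exact absurd (snoc_inj this).2 (by decide)
  · rw [show H [(2:Fin 3)] = [1] from rfl] at h
    exact ⟨w', rfl, (snoc_inj h).1⟩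

lemma endsWith2 : ∀ (w Q : List (Fin 3)), H w = Q ++ [2] →
    ∃ w', (w = w' ++ [0] ∧ Q = H w' ++ [0,1]) ∨ (w = w' ++ [1] ∧ Q = H w' ++ [0]) := by
  intro w Q h
  have hw : w ≠ [] := by rintro rfl; rw [H_nil] at h; exact absurd h (by simp)
  obtain ⟨w', z, rfl⟩ := lastBlock w hw
  rw [H_append] at h
  rcases fin3 z with rfl|rfl|rfl
  · rw [show H [(0:Fin 3)] = [0,1,2] from rfl] at h
    have : (H w' ++ [0,1]) ++ [2] = Q ++ [2] := by simpa [List.append_assoc] using h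
    exact ⟨w', Or.inl ⟨rfl, (snoc_inj this).1.symm⟩⟩
  · rw [show H [(1:Fin 3)] = [0,2] from rfl] at h
    have : (H w' ++ [0]) ++ [2] = Q ++ [2] := by simpa [List.append_assoc] using h
    exact ⟨w', Or.inr ⟨rfl, (snoc_inj this).1.symm⟩⟩
  · rw [show H [(2:Fin 3)] = [1] from rfl] at h
    exact absurd (snoc_inj h).2 (by decide)

lemma firstZero : ∀ (X : List (Fin 3)), (0:Fin 3) ∈ X →
    ∃ u y, X = u ++ 0 :: y ∧ (0:Fin 3) ∉ u := by
  intro X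
  induction X with
  | nil => intro h; exact absurd h (by simp)
  | cons x X ih =>
    intro h
    by_cases hx : x = 0
    · exact ⟨[], X, by rw [hx]; rfl, by simp⟩
    · obtain ⟨u, y, rfl, hu⟩ := ih (by rcases List.mem_cons.1 h with h|h; exact absurd h.symm hx; exact h)
      exact ⟨x::u, y, rfl, by simp [hu, Ne.symm hx]⟩

lemma decode01 : ∀ (v S : List (Fin 3)), H v = 0::1::S → ∃ w4, v = 0::w4 := by
  intro v S h
  match v with
  | [] => exact absurd h (by rw [H_nil]; simp)
  | z::w4 =>
    rw [H_cons] at h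
    rcases fin3 z with rfl|rfl|rfl
    · exact ⟨w4, rfl⟩
    · rw [mor1] at h
      simp only [List.cons_append, List.cons.injEq] at h
      exact absurd h.2.1 (by decide)
    · rw [mor2] at h
      simp only [List.cons_append, List.cons.injEq] at h
      exact absurd h.1 (by decide)

lemma decode0 : ∀ (v S : List (Fin 3)), H v = 0::S → ∃ z w4, v = z::w4 ∧ (z = 0 ∨ z = 1) := by
  intro v S h
  match v with
  | [] => exact absurd h (by rw [H_nil]; simp)
  | z::w4 =>
    rcases fin3 z with rfl|rfl|rfl
    · exact ⟨0, w4, rfl, Or.inl rfl⟩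
    · exact ⟨1, w4, rfl, Or.inr rfl⟩
    · rw [H_cons, mor2] at h
      simp only [List.cons_append, List.cons.injEq] at h
      exact absurd h.1 (by decide)

lemma infix121 : ∀ u : List (Fin 3), u <:+: [1,2,1] → (0:Fin 3) ∉ u →
    u = [] ∨ u = [1] ∨ u = [2] ∨ u = [1,2] ∨ u = [2,1] ∨ u = [1,2,1] := by
  intro u hinf h0
  have hlen : u.length ≤ 3 := hinf.length_le
  match u with
  | [] => tauto
  | [a] =>
    rcases fin3 a with rfl|rfl|rfl
    · simp at h0
    · tauto
    · tauto
  | [a,b] =>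
    rcases fin3 a with rfl|rfl|rfl <;> rcases fin3 b with rfl|rfl|rfl <;>
      first
      | (exact absurd (by decide) h0)
      | (exact absurd hinf (by decide))
      | decide
  | [a,b,c] =>
    rcases fin3 a with rfl|rfl|rfl <;> rcases fin3 b with rfl|rfl|rfl <;>
        rcases fin3 c with rfl|rfl|rfl <;>
      first
      | (exact absurd (by decide) h0)
      | (exact absurd hinf (by decide))
      | decide
  | a::b::c::d::u' => simp at hlen; omega

def SF (w : List (Fin 3)) : Prop := ∀ X : List (Fin 3), X ≠ [] → ¬ (X ++ X <:+: w)

end Aux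

section Main

lemma mainSF : ∀ w : List (Fin 3), SF w → ¬([0,1,0] <:+: w) → ¬([2,1,2] <:+: w) →
    SF (H w) := by
  intro w hsf h010 h212 X hX hinf
  obtain ⟨P, S, hPS⟩ := hinf
  have no22 : ¬([2,2] <:+: w) := fun hc => hsf [2] (by simp) (by simpa using hc)
  by_cases h0 : (0:Fin 3) ∈ X
  case neg =>
    -- X contains no 0 : the square is a 0-free factor, too short
    have hzf : X ++ X <:+: [1,2,1] :=
      zeroFreeFactor w P (X++X) S no22 (by rw [← hPS]; simp [List.append_assoc])
        (by simp [h0])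
    have hlen : (X ++ X).length ≤ 3 := hzf.length_le
    simp only [List.length_append] at hlen
    have hX1 : X.length = 1 := by
      have := List.length_pos_iff.2 hX
      omega
    obtain ⟨a, rfl⟩ := List.length_eq_one_iff.1 hX1
    rcases fin3 a with rfl|rfl|rfl
    · exact absurd hzf (by decide)
    · exact absurd hzf (by decide)
    · exact absurd hzf (by decide)
  case pos =>
    obtain ⟨u, y, rfl, hu⟩ := firstZero X h0
    -- the whole image splits at the two block-aligned zeros
    have hu_inf : u <:+: [1,2,1] :=
      zeroFreeFactor w P u ((0:Fin 3) :: (y ++ (u ++ 0 :: (y ++ S)))) no22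
        (by rw [← hPS]; simp [List.append_assoc]) hu
    have e1 : H w = (P ++ u) ++ 0 :: (y ++ (u ++ 0 :: (y ++ S))) := by
      rw [← hPS]; simp [List.append_assoc]
    obtain ⟨w1, w2, rfl, hw1, hw2⟩ := split0 w (P ++ u) _ e1
    have e2 : H w2 = ((0:Fin 3) :: (y ++ u)) ++ 0 :: (y ++ S) := by
      rw [hw2]; simp [List.append_assoc]
    obtain ⟨m, w3, rfl, hm, hw3⟩ := split0 w2 _ _ e2
    -- hm : H m = 0 :: (y ++ u),  hw3 : H w3 = 0 :: (y ++ S),  hw1 : H w1 = P ++ u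
    rcases infix121 u hu_inf hu with rfl | rfl | rfl | rfl | rfl | rfl
    · -- u = []
      have hm' : H m = (0:Fin 3) :: y := by simpa using hm
      have hmne : m ≠ [] := by rintro rfl; rw [H_nil] at hm'; exact absurd hm' (by simp)
      obtain ⟨w4, rfl, _⟩ := decodePrefix m w3 S (by rw [hw3, hm']; simp)
      exact hsf m hmne ⟨w1, w4, by simp [List.append_assoc]⟩
    · -- u = [1]
      obtain ⟨m₀, rfl, hm₀⟩ := endsWith1 m (0::y) (by rw [hm]; simp)
      obtain ⟨w4, rfl, _⟩ := decodePrefix m₀ w3 S (by rw [hw3, hm₀]; simp)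
      obtain ⟨v, rfl, _⟩ := endsWith1 w1 P (by rw [hw1])
      exact hsf (2::m₀) (by simp) ⟨v, w4, by simp [List.append_assoc]⟩
    · -- u = [2]
      obtain ⟨m₀, hcase⟩ := endsWith2 m (0::y) (by rw [hm]; simp)
      rcases hcase with ⟨rfl, hQ⟩ | ⟨rfl, hQ⟩
      · -- m = m₀ ++ [0]
        obtain ⟨w3', rfl, hw3'⟩ := decodePrefix m₀ w3 (0::1::S)
          (by rw [hw3, show (0:Fin 3)::(y++S) = (0::y) ++ S by simp, hQ]; simp)
        obtain ⟨w4, rfl⟩ := decode01 w3' S hw3'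
        exact hsf (m₀ ++ [0]) (by simp) ⟨w1, w4, by simp [List.append_assoc]⟩
      · -- m = m₀ ++ [1]
        obtain ⟨w3', rfl, hw3'⟩ := decodePrefix m₀ w3 (0::S)
          (by rw [hw3, show (0:Fin 3)::(y++S) = (0::y) ++ S by simp, hQ]; simp)
        obtain ⟨z'', w4, rfl, hz''⟩ := decode0 w3' S hw3'
        rcases hz'' with rfl | rfl
        · -- hard case : the follower is 0
          have hvz : ∃ v z', (z' = 0 ∨ z' = 1) ∧ w1 = v ++ [z'] := by
            rcases endsWith2 w1 P (by rw [hw1]) with ⟨v, ⟨rfl, _⟩ | ⟨rfl, _⟩⟩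
            exacts [⟨v, 0, Or.inl rfl, rfl⟩, ⟨v, 1, Or.inr rfl, rfl⟩]
          obtain ⟨v, z', hz', rfl⟩ := hvz
          match m₀ with
          | [] =>
            rcases hz' with rfl | rfl
            · exact h010 ⟨v, w4, by simp [List.append_assoc]⟩
            · exact hsf [1] (by simp) ⟨v, 0::w4, by simp [List.append_assoc]⟩
          | c::m₀' =>
            obtain ⟨m₁, d, hld⟩ := lastBlock (c::m₀') (by simp)
            rcases fin3 d with rfl|rfl|rfl
            · exact hsf [0] (by simp)
                ⟨(v ++ [z']) ++ ((c::m₀') ++ [1]) ++ m₁, w4,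
                  by rw [hld]; simp [List.append_assoc]⟩
            · exact hsf [1] (by simp)
                ⟨(v ++ [z']) ++ m₁, (m₁ ++ [1]) ++ 0::w4,
                  by rw [hld]; simp [List.append_assoc]⟩
            · rcases fin3 c with rfl|rfl|rfl
              · rcases hz' with rfl | rfl
                · exact hsf [0] (by simp)
                    ⟨v, m₀' ++ [1] ++ (0::m₀') ++ 0::w4, by simp [List.append_assoc]⟩
                · exact hsf (1::0::m₀') (by simp) ⟨v, 0::w4, by simp [List.append_assoc]⟩
              · exact hsf [1] (by simp)
                  ⟨(v ++ [z']) ++ (1::m₀'), m₀' ++ 0::w4, by simp [List.append_assoc]⟩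
              · -- c = 2, d = 2 : forbidden factor 212
                match m₁, hld with
                | [], hld =>
                  have : m₀' = [] := by simpa using hld
                  subst this
                  exact h212 ⟨v ++ [z'], 0::w4, by simp [List.append_assoc]⟩
                | c₁::m₁', hld =>
                  simp only [List.cons_append, List.cons.injEq] at hld
                  obtain ⟨rfl, rfl⟩ := hld
                  exact h212 ⟨(v ++ [z']) ++ 2::m₁', m₁' ++ [2] ++ 0::w4,
                    by simp [List.append_assoc]⟩
        · exact hsf (m₀ ++ [1]) (by simp) ⟨w1, w4, by simp [List.append_assoc]⟩
    · -- u = [1,2]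
      obtain ⟨m₀, hcase⟩ := endsWith2 m (0::(y++[1])) (by rw [hm]; simp)
      rcases hcase with ⟨rfl, hQ⟩ | ⟨rfl, hQ⟩
      · have h0y : (0:Fin 3)::y = H m₀ ++ [0] := by
          have h' : ((0:Fin 3)::y) ++ [1] = (H m₀ ++ [0]) ++ [1] := by
            simpa [List.append_assoc] using hQ
          exact (snoc_inj h').1
        obtain ⟨w3', rfl, _⟩ := decodePrefix m₀ w3 (0::S)
          (by rw [hw3, show (0:Fin 3)::(y++S) = (0::y) ++ S by simp, h0y]; simp)
        have hv : ∃ v, w1 = v ++ [0] := by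
          rcases endsWith2 w1 (P++[1]) (by rw [hw1]; simp) with ⟨v, ⟨rfl, _⟩ | ⟨rfl, hPv⟩⟩
          · exact ⟨v, rfl⟩
          · exact absurd (snoc_inj (A := P) (B := H v) (x := 1) (y := 0) (by simpa [List.append_assoc] using hPv)).2 (by decide)
        obtain ⟨v, rfl⟩ := hv
        exact hsf (0::m₀) (by simp) ⟨v, w3', by simp [List.append_assoc]⟩
      · exact absurd (snoc_inj (show ((0:Fin 3)::y) ++ [1] = H m₀ ++ [0] by
          simpa [List.append_assoc] using hQ)).2 (by decide)
    · -- u = [2,1]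
      obtain ⟨m₀, rfl, hm₀⟩ := endsWith1 m (0::(y++[2])) (by rw [hm]; simp)
      obtain ⟨m₁, hcase⟩ := endsWith2 m₀ (0::y) (by rw [hm₀]; simp)
      obtain ⟨v, rfl, hv⟩ := endsWith1 w1 (P++[2]) (by rw [hw1]; simp)
      rcases hcase with ⟨rfl, hQ⟩ | ⟨rfl, hQ⟩
      · -- m₀ = m₁ ++ [0]
        obtain ⟨w3', rfl, hw3'⟩ := decodePrefix m₁ w3 (0::1::S)
          (by rw [hw3, show (0:Fin 3)::(y++S) = (0::y) ++ S by simp, hQ]; simp)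
        obtain ⟨w4, rfl⟩ := decode01 w3' S hw3'
        exact hsf (2::(m₁++[0])) (by simp) ⟨v, w4, by simp [List.append_assoc]⟩
      · -- m₀ = m₁ ++ [1]
        obtain ⟨w3', rfl, hw3'⟩ := decodePrefix m₁ w3 (0::S)
          (by rw [hw3, show (0:Fin 3)::(y++S) = (0::y) ++ S by simp, hQ]; simp)
        obtain ⟨z'', w4, rfl, hz''⟩ := decode0 w3' S hw3'
        rcases hz'' with rfl | rfl
        · match m₁ with
          | [] => exact h212 ⟨v, 0::w4, by simp [List.append_assoc]⟩
          | c::m₁'' =>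
            obtain ⟨m₂, d, hld⟩ := lastBlock (c::m₁'') (by simp)
            rcases fin3 d with rfl|rfl|rfl
            · exact hsf [0] (by simp)
                ⟨(v ++ [2]) ++ ((c::m₁'') ++ [1] ++ [2]) ++ m₂, w4,
                  by rw [hld]; simp [List.append_assoc]⟩
            · exact hsf [1] (by simp)
                ⟨(v ++ [2]) ++ m₂, [2] ++ (c::m₁'') ++ 0::w4,
                  by rw [hld]; simp [List.append_assoc]⟩
            · exact h212 ⟨(v ++ [2]) ++ m₂, (c::m₁'') ++ 0::w4,
                by rw [hld]; simp [List.append_assoc]⟩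
        · exact hsf (2::(m₁++[1])) (by simp) ⟨v, w4, by simp [List.append_assoc]⟩
    · -- u = [1,2,1]
      obtain ⟨m₀, rfl, hm₀⟩ := endsWith1 m (0::(y++[1,2])) (by rw [hm]; simp)
      obtain ⟨m₁, hcase⟩ := endsWith2 m₀ (0::(y++[1])) (by rw [hm₀]; simp)
      rcases hcase with ⟨rfl, hQ⟩ | ⟨rfl, hQ⟩
      · have h0y : (0:Fin 3)::y = H m₁ ++ [0] := by
          have h' : ((0:Fin 3)::y) ++ [1] = (H m₁ ++ [0]) ++ [1] := by
            simpa [List.append_assoc] using hQ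
          exact (snoc_inj h').1
        obtain ⟨w3', rfl, _⟩ := decodePrefix m₁ w3 (0::S)
          (by rw [hw3, show (0:Fin 3)::(y++S) = (0::y) ++ S by simp, h0y]; simp)
        obtain ⟨v, rfl, hv⟩ := endsWith1 w1 (P++[1,2]) (by rw [hw1]; simp)
        have hv' : ∃ v', v = v' ++ [0] := by
          rcases endsWith2 v (P++[1]) (by rw [hv]; simp) with ⟨v', ⟨rfl, _⟩ | ⟨rfl, hPv⟩⟩
          · exact ⟨v', rfl⟩
          · exact absurd (snoc_inj (A := P) (B := H v') (x := 1) (y := 0) (by simpa [List.append_assoc] using hPv)).2 (by decide)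
        obtain ⟨v', rfl⟩ := hv'
        exact hsf (0::2::m₁) (by simp) ⟨v', w3', by simp [List.append_assoc]⟩
      · exact absurd (snoc_inj (show ((0:Fin 3)::y) ++ [1] = H m₁ ++ [0] by
          simpa [List.append_assoc] using hQ)).2 (by decide)

end Main

lemma good_iter : ∀ m : ℕ, SF (iterWord m) ∧
    ¬([0,1,0] <:+: iterWord m) ∧ ¬([2,1,2] <:+: iterWord m) := by
  intro m
  induction m with
  | zero =>
    refine ⟨?_, ?_, ?_⟩
    · rintro X hX ⟨s, t, h⟩
      have h1 := congrArg List.length h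
      simp [iterWord] at h1
      have := List.length_pos_iff.2 hX
      omega
    · rintro ⟨s, t, h⟩; have := congrArg List.length h; simp [iterWord] at this; omega
    · rintro ⟨s, t, h⟩; have := congrArg List.length h; simp [iterWord] at this; omega
  | succ m ih =>
    have hdef : iterWord (m+1) = H (iterWord m) := rfl
    rw [hdef]
    exact ⟨mainSF _ ih.1 ih.2.1 ih.2.2, no010 _, no212 _⟩

/-- The fixed point of the morphism `a → abc`, `b → ac`, `c → b` is an infinite
square-free word: each iterate is a prefix of the next, and no iterate (hence
no finite factor of the fixed point) contains a factor `X ++ X` with `X`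
nonempty. -/
theorem fixed_point_square_free :
    (∀ m : ℕ, iterWord m <+: iterWord (m + 1)) ∧
    (∀ m : ℕ, ∀ X : List (Fin 3), X ≠ [] → ¬ (X ++ X) <:+: iterWord m) := by
  constructor
  · intro m
    induction m with
    | zero => exact ⟨[1,2], rfl⟩
    | succ m ih =>
      obtain ⟨t, ht⟩ := ih
      exact ⟨H t, by show H (iterWord m) ++ H t = H (iterWord (m+1)); rw [← H_append, ht]⟩
  · intro m X hX
    exact (good_iter m).1 X hX
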